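/- Let k be a commutative ring (e.g. a field), let 𝔤 and 𝔥 be Lie algebras over k, let ρ : 𝔤 → 𝔤𝔩(𝔥) be a representation of 𝔤 on the underlying module of 𝔥, and let σ : 𝔥 → 𝔤𝔩(𝔤) be a representation of 𝔥 on the underlying module of 𝔤. Define a k-bilinear antisymmetric bracket on 𝔤 ⊕ 𝔥 by [(x,a),(y,b)] = ([x,y] + σ_a(y) − σ_b(x), [a,b] + ρ_x(b) − ρ_y(a)). Then this bracket satisfies the Jacobi identity — and hence makes 𝔤 ⊕ 𝔥 into a Lie algebra containing 𝔤 ⊕ 0 and 0 ⊕ 𝔥 as Lie subalgebras — if and only if for all x, x₁, x₂ ∈ 𝔤 and a, b₁, b₂ ∈ 𝔥 the two compatibility conditions hold: (ii) ρ_x([b₁,b₂]) = [ρ_x(b₁), b₂] + [b₁, ρ_x(b₂)] + ρ_{σ_{b₂}(x)}(b₁) − ρ_{σ_{b₁}(x)}(b₂), and (iii) σ_a([x₁,x₂]) = [σ_a(x₁), x₂] + [x₁, σ_a(x₂)] + σ_{ρ_{x₂}(a)}(x₁) − σ_{ρ_{x₁}(a)}(x₂). -/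

import Mathlib

attribute [local instance] LieRing.ofAssociativeRing

/-- The bilinear antisymmetric bracket of a (candidate) matched pair of Lie algebras:
`[(x,a),(y,b)] = ([x,y] + σ_a(y) - σ_b(x), [a,b] + ρ_x(b) - ρ_y(a))`. -/
def matchedPairBracket {k : Type*} [CommRing k] {L₁ L₂ : Type*}
    [LieRing L₁] [LieAlgebra k L₁] [LieRing L₂] [LieAlgebra k L₂]
    (ρ : L₁ →ₗ⁅k⁆ Module.End k L₂) (σ : L₂ →ₗ⁅k⁆ Module.End k L₁)
    (u v : L₁ × L₂) : L₁ × L₂ :=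
  (⁅u.1, v.1⁆ + σ u.2 v.1 - σ v.2 u.1, ⁅u.2, v.2⁆ + ρ u.1 v.2 - ρ v.1 u.2)

/-!
Call the difference of the two sides of (ii) the defect of (ii). Expanding the Jacobiator of
`(x, a), (y, b), (z, c)` and using that `ρ` is a representation and that `𝔥` satisfies the Jacobi
identity, its `𝔥`-component is minus the sum of the defects of (ii) at `(x, b, c)`, `(y, c, a)`
and `(z, a, b)`. The bracket is symmetric under exchanging `(𝔤, ρ)` with `(𝔥, σ)`, so the
`𝔤`-component is the same expression in the defects of (iii). Hence the compatibility conditions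
make the Jacobiator vanish; conversely, at `(x, 0), (0, b₁), (0, b₂)` only the defect of (ii) at
`(x, b₁, b₂)` survives.
-/

theorem lie_lie_add_lie_lie_add_lie_lie {L : Type*} [LieRing L] (a b c : L) :
    ⁅⁅a, b⁆, c⁆ + ⁅⁅b, c⁆, a⁆ + ⁅⁅c, a⁆, b⁆ = 0 := by
  rw [← lie_skew ⁅a, b⁆ c, ← lie_skew ⁅b, c⁆ a, ← lie_skew ⁅c, a⁆ b]
  linear_combination (norm := abel) -lie_jacobi c a b

theorem LieHom.map_lie_apply {k L M : Type*} [CommRing k] [LieRing L] [LieAlgebra k L]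
    [AddCommGroup M] [Module k M] (ρ : L →ₗ⁅k⁆ Module.End k M) (x y : L) (m : M) :
    ρ ⁅x, y⁆ m = ρ x (ρ y m) - ρ y (ρ x m) := by
  rw [LieHom.map_lie, Ring.lie_def]
  rfl

namespace MatchedPair

variable {k : Type*} [CommRing k] {L₁ L₂ : Type*}
  [LieRing L₁] [LieAlgebra k L₁] [LieRing L₂] [LieAlgebra k L₂]
  (ρ : L₁ →ₗ⁅k⁆ Module.End k L₂) (σ : L₂ →ₗ⁅k⁆ Module.End k L₁)

def defect (x : L₁) (b₁ b₂ : L₂) : L₂ :=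
  ρ x ⁅b₁, b₂⁆ - (⁅ρ x b₁, b₂⁆ + ⁅b₁, ρ x b₂⁆ + ρ (σ b₂ x) b₁ - ρ (σ b₁ x) b₂)

def jacobiator (u v w : L₁ × L₂) : L₁ × L₂ :=
  matchedPairBracket ρ σ (matchedPairBracket ρ σ u v) w +
    matchedPairBracket ρ σ (matchedPairBracket ρ σ v w) u +
    matchedPairBracket ρ σ (matchedPairBracket ρ σ w u) v

theorem defect_eq_zero_iff (x : L₁) (b₁ b₂ : L₂) :
    defect ρ σ x b₁ b₂ = 0 ↔
      ρ x ⁅b₁, b₂⁆ = ⁅ρ x b₁, b₂⁆ + ⁅b₁, ρ x b₂⁆ + ρ (σ b₂ x) b₁ - ρ (σ b₁ x) b₂ :=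
  sub_eq_zero

@[simp]
theorem defect_zero_left (b₁ b₂ : L₂) : defect ρ σ 0 b₁ b₂ = 0 := by
  simp [defect]

theorem matchedPairBracket_swap (u v : L₁ × L₂) :
    matchedPairBracket σ ρ u.swap v.swap = (matchedPairBracket ρ σ u v).swap :=
  rfl

theorem jacobiator_swap (u v w : L₁ × L₂) :
    jacobiator σ ρ u.swap v.swap w.swap = (jacobiator ρ σ u v w).swap := by
  simp only [jacobiator, matchedPairBracket_swap, Prod.swap_add]

theorem jacobiator_snd (x y z : L₁) (a b c : L₂) :
    (jacobiator ρ σ (x, a) (y, b) (z, c)).2 =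
      -(defect ρ σ x b c + defect ρ σ y c a + defect ρ σ z a b) := by
  simp only [jacobiator, matchedPairBracket, defect, Prod.snd_add, map_add, map_sub,
    LinearMap.add_apply, LinearMap.sub_apply, add_lie, sub_lie, LieHom.map_lie_apply]
  rw [← lie_skew (ρ x c) b, ← lie_skew (ρ y a) c, ← lie_skew (ρ z b) a]
  linear_combination (norm := abel) lie_lie_add_lie_lie_add_lie_lie a b c

theorem jacobiator_fst (x y z : L₁) (a b c : L₂) :
    (jacobiator ρ σ (x, a) (y, b) (z, c)).1 =
      -(defect σ ρ a y z + defect σ ρ b z x + defect σ ρ c x y) := by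
  rw [← Prod.snd_swap, ← jacobiator_swap]
  exact jacobiator_snd σ ρ a b c x y z

end MatchedPair

/-- **matched pairs of Lie algebras.**  Let `𝔤 = L₁` and `𝔥 = L₂` be Lie
algebras over a commutative ring `k`, let `ρ : 𝔤 → 𝔤𝔩(𝔥)` be a representation of `𝔤` on the
underlying module of `𝔥` and `σ : 𝔥 → 𝔤𝔩(𝔤)` a representation of `𝔥` on the underlying module
of `𝔤`.  The bracket `[(x,a),(y,b)] = ([x,y] + σ_a y - σ_b x, [a,b] + ρ_x b - ρ_y a)` on
`𝔤 ⊕ 𝔥` satisfies the Jacobi identity (hence makes `𝔤 ⊕ 𝔥` a Lie algebra containing `𝔤 ⊕ 0`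
and `0 ⊕ 𝔥` as Lie subalgebras) if and only if the two matched-pair compatibility conditions
hold. -/
theorem matchedPair_jacobi_iff {k : Type*} [CommRing k] {L₁ L₂ : Type*}
    [LieRing L₁] [LieAlgebra k L₁] [LieRing L₂] [LieAlgebra k L₂]
    (ρ : L₁ →ₗ⁅k⁆ Module.End k L₂) (σ : L₂ →ₗ⁅k⁆ Module.End k L₁) :
    (∀ u v w : L₁ × L₂,
        matchedPairBracket ρ σ (matchedPairBracket ρ σ u v) w +
          matchedPairBracket ρ σ (matchedPairBracket ρ σ v w) u +
          matchedPairBracket ρ σ (matchedPairBracket ρ σ w u) v = 0)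
      ↔ ((∀ (x : L₁) (b₁ b₂ : L₂),
            ρ x ⁅b₁, b₂⁆ =
              ⁅ρ x b₁, b₂⁆ + ⁅b₁, ρ x b₂⁆ + ρ (σ b₂ x) b₁ - ρ (σ b₁ x) b₂) ∧
          (∀ (a : L₂) (x₁ x₂ : L₁),
            σ a ⁅x₁, x₂⁆ =
              ⁅σ a x₁, x₂⁆ + ⁅x₁, σ a x₂⁆ + σ (ρ x₂ a) x₁ - σ (ρ x₁ a) x₂)) := by
  change (∀ u v w, MatchedPair.jacobiator ρ σ u v w = 0) ↔ _
  simp only [← MatchedPair.defect_eq_zero_iff]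
  constructor
  · intro h
    refine ⟨fun x b₁ b₂ => ?_, fun a x₁ x₂ => ?_⟩
    · simpa [MatchedPair.jacobiator_snd] using congrArg Prod.snd (h (x, 0) (0, b₁) (0, b₂))
    · simpa [MatchedPair.jacobiator_fst] using congrArg Prod.fst (h (0, a) (x₁, 0) (x₂, 0))
  · rintro ⟨h₁, h₂⟩ ⟨x, a⟩ ⟨y, b⟩ ⟨z, c⟩
    ext <;> simp [MatchedPair.jacobiator_fst, MatchedPair.jacobiator_snd, h₁, h₂]
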